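/- Suppose T = β_0 D + Σ_{k=1}^p φ_k Z_k + ε with E[ε | Z] = 0, where Z_1,...,Z_p are mutually independent with means ζ_j. Define the moment function m(β) = E[(Z_1 − ζ_1)(Z_2 − ζ_2)(T − β D)]. Then m(β_0) = 0; moreover, if E[(Z_1 − ζ_1)(Z_2 − ζ_2) D] ≠ 0, then β_0 is the unique real number β with m(β) = 0. -/

import Mathlib

open MeasureTheory ProbabilityTheory

/-!
Write `W = (Z₁ − ζ₁)(Z₂ − ζ₂)`. Since `W` is a function of `Z`, the tower property and
`E[ε | Z] = 0` give `E[W ε] = 0`. For every `k`, one of the two centred factors of `W` is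
independent of the pair formed by the other factor and `Z_k`, so `E[W Z_k] = 0` as well.
Substituting the structural equation therefore leaves `m(β) = (β₀ − β) E[W D]`, which is
affine in `β` with slope `−E[W D]`.
-/

theorem integral_mul_eq_zero_of_condExp_eq_zero {Ω : Type*} {m m₀ : MeasurableSpace Ω}
    {μ : Measure[m₀] Ω} (hm : m ≤ m₀) [SigmaFinite (μ.trim hm)] {g ε : Ω → ℝ}
    (hg : Measurable[m] g)
    (hgε : Integrable (fun ω => g ω * ε ω) μ) (hε : Integrable ε μ) (hcond : μ[ε | m] =ᵐ[μ] 0) :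
    ∫ ω, g ω * ε ω ∂μ = 0 := by
  have hpull : μ[fun ω => g ω * ε ω | m] =ᵐ[μ] 0 := by
    filter_upwards [condExp_mul_of_stronglyMeasurable_left hg.stronglyMeasurable hgε hε, hcond]
      with ω hω hω'
    exact hω.trans (by simp [hω'])
  rw [← integral_condExp hm, integral_congr_ae hpull]
  simp

section

variable {Ω : Type*} [MeasurableSpace Ω] {μ : Measure Ω}

theorem integral_sub_integral_eq_zero [IsProbabilityMeasure μ] {X : Ω → ℝ}
    (hX : Integrable X μ) : ∫ ω, X ω - ∫ ω', X ω' ∂μ ∂μ = 0 := by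
  rw [integral_sub hX (integrable_const _), integral_const, probReal_univ, one_smul, sub_self]

theorem ProbabilityTheory.IndepFun.integral_mul_sub_integral_eq_zero [IsProbabilityMeasure μ]
    {X Y : Ω → ℝ} (hXY : IndepFun X Y μ) (hX : AEStronglyMeasurable X μ)
    (hY : Integrable Y μ) : ∫ ω, X ω * (Y ω - ∫ ω', Y ω' ∂μ) ∂μ = 0 := by
  have hXY' : IndepFun X (fun ω => Y ω - ∫ ω', Y ω' ∂μ) μ :=
    hXY.comp measurable_id (measurable_sub_const _)
  rw [hXY'.integral_fun_mul_eq_mul_integral hX (hY.sub (integrable_const _)).aestronglyMeasurable,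
    integral_sub_integral_eq_zero hY, mul_zero]

theorem ProbabilityTheory.iIndepFun.integral_mul_sub_integral_eq_zero [IsProbabilityMeasure μ]
    {ι : Type*} {Z : ι → Ω → ℝ} (hZ : iIndepFun Z μ) (hmeas : ∀ i, Measurable (Z i))
    {i j k : ι} (hik : i ≠ k) (hjk : j ≠ k) (hint : Integrable (Z k) μ)
    {f : ℝ × ℝ → ℝ} (hf : Measurable f) :
    ∫ ω, f (Z i ω, Z j ω) * (Z k ω - ∫ ω', Z k ω' ∂μ) ∂μ = 0 :=
  ((hZ.indepFun_prodMk hmeas i j k hik hjk).comp hf measurable_id).integral_mul_sub_integral_eq_zero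
    (hf.comp ((hmeas i).prodMk (hmeas j))).aestronglyMeasurable hint

theorem ProbabilityTheory.iIndepFun.integral_centered_mul_centered_mul_eq_zero
    [IsProbabilityMeasure μ] {ι : Type*} {Z : ι → Ω → ℝ} (hZ : iIndepFun Z μ)
    (hmeas : ∀ i, Measurable (Z i)) (hint : ∀ i, Integrable (Z i) μ) {i j : ι} (hij : i ≠ j)
    (k : ι) :
    ∫ ω, (Z i ω - ∫ ω', Z i ω' ∂μ) * (Z j ω - ∫ ω', Z j ω' ∂μ) * Z k ω ∂μ = 0 := by
  by_cases hkj : k = j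
  · subst hkj
    have := hZ.integral_mul_sub_integral_eq_zero hmeas hij.symm hij.symm (hint i)
      (f := fun x => (x.1 - ∫ ω', Z k ω' ∂μ) * x.2) (by fun_prop)
    rw [← this]
    congr 1 with ω
    ring
  · have := hZ.integral_mul_sub_integral_eq_zero hmeas hij hkj (hint j)
      (f := fun x => (x.1 - ∫ ω', Z i ω' ∂μ) * x.2) (by fun_prop)
    rw [← this]
    congr 1 with ω
    ring

theorem integral_mul_sub_mul_of_linear_model {ι : Type*} [Fintype ι]
    {W T D ε : Ω → ℝ} {Z : ι → Ω → ℝ} {β₀ : ℝ} {φ : ι → ℝ}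
    (hT : ∀ ω, T ω = β₀ * D ω + (∑ k, φ k * Z k ω) + ε ω)
    (hD : Integrable (fun ω => W ω * D ω) μ) (hZ : ∀ k, Integrable (fun ω => W ω * Z k ω) μ)
    (hε : Integrable (fun ω => W ω * ε ω) μ) (β : ℝ) :
    ∫ ω, W ω * (T ω - β * D ω) ∂μ =
      (β₀ - β) * ∫ ω, W ω * D ω ∂μ + ∑ k, φ k * ∫ ω, W ω * Z k ω ∂μ + ∫ ω, W ω * ε ω ∂μ := by
  have hZφ : ∀ k ∈ Finset.univ, Integrable (fun ω => φ k * (W ω * Z k ω)) μ :=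
    fun k _ => (hZ k).const_mul (φ k)
  have hexpand : (fun ω => W ω * (T ω - β * D ω)) =
      fun ω => (β₀ - β) * (W ω * D ω) + ∑ k, φ k * (W ω * Z k ω) + W ω * ε ω := by
    ext ω
    simp only [hT, mul_sub, mul_add, Finset.mul_sum, mul_left_comm (W ω)]
    ring
  have hDZ : Integrable (fun ω => (β₀ - β) * (W ω * D ω) + ∑ k, φ k * (W ω * Z k ω)) μ :=
    (hD.const_mul _).add (integrable_finsetSum _ hZφ)
  rw [hexpand, integral_add hDZ hε, integral_add (hD.const_mul _) (integrable_finsetSum _ hZφ),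
    integral_finsetSum _ hZφ]
  simp only [integral_const_mul]

end

theorem interaction_moment_unique_zero_general
    {Ω : Type*} [MeasurableSpace Ω] (μ : Measure Ω) [IsProbabilityMeasure μ]
    {p : ℕ} (Z : Fin p → Ω → ℝ) (T D ε : Ω → ℝ)
    (hmeas : ∀ i, Measurable (Z i))
    (hindep : iIndepFun Z μ)
    (hint : ∀ i, Integrable (Z i) μ)
    (ζ : Fin p → ℝ) (hζ : ∀ i, ζ i = ∫ ω, Z i ω ∂μ)
    (β₀ : ℝ) (φ : Fin p → ℝ)
    (hstruct : ∀ ω, T ω = β₀ * D ω + (∑ k, φ k * Z k ω) + ε ω)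
    (hεint : Integrable ε μ)
    (hcond : μ[ε | MeasurableSpace.comap (fun ω i => Z i ω) inferInstance] =ᵐ[μ] 0)
    (j₁ j₂ : Fin p) (hj : j₁ ≠ j₂)
    (hDprod : Integrable (fun ω => (Z j₁ ω - ζ j₁) * (Z j₂ ω - ζ j₂) * D ω) μ)
    (hεprod : Integrable (fun ω => (Z j₁ ω - ζ j₁) * (Z j₂ ω - ζ j₂) * ε ω) μ)
    (hZprod : ∀ k, Integrable (fun ω => (Z j₁ ω - ζ j₁) * (Z j₂ ω - ζ j₂) * Z k ω) μ)
    (m : ℝ → ℝ)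
    (hm : ∀ β, m β = ∫ ω, (Z j₁ ω - ζ j₁) * (Z j₂ ω - ζ j₂) * (T ω - β * D ω) ∂μ) :
    m β₀ = 0 ∧
      ((∫ ω, (Z j₁ ω - ζ j₁) * (Z j₂ ω - ζ j₂) * D ω ∂μ) ≠ 0 →
        ∀ β : ℝ, m β = 0 → β = β₀) := by
  simp only [hζ] at hm hDprod hεprod hZprod ⊢
  have hZ_meas : ∀ i, Measurable[MeasurableSpace.comap (fun ω i => Z i ω) inferInstance] (Z i) :=
    fun i => (measurable_pi_apply i).comp (comap_measurable (fun ω i => Z i ω))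
  have hWZ := hindep.integral_centered_mul_centered_mul_eq_zero hmeas hint hj
  have hWε := integral_mul_eq_zero_of_condExp_eq_zero (measurable_pi_lambda _ hmeas).comap_le
    (by fun_prop) hεprod hεint hcond
  have hmβ : ∀ β, m β = (β₀ - β) *
      ∫ ω, (Z j₁ ω - ∫ ω', Z j₁ ω' ∂μ) * (Z j₂ ω - ∫ ω', Z j₂ ω' ∂μ) * D ω ∂μ := fun β => by
    rw [hm, integral_mul_sub_mul_of_linear_model hstruct hDprod hZprod hεprod, hWε]
    simp [hWZ]
  refine ⟨by simp [hmβ], fun hne β hβ => ?_⟩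
  rw [hmβ, mul_eq_zero] at hβ
  exact (sub_eq_zero.1 (hβ.resolve_right hne)).symm

/-- The interaction moment function `m(β) = E[(Z₁−ζ₁)(Z₂−ζ₂)(T − βD)]` vanishes at the
true `β₀`, and if the interaction relevance `E[(Z₁−ζ₁)(Z₂−ζ₂)D] ≠ 0` holds then `β₀`
is its unique zero. -/
theorem interaction_moment_unique_zero
    {Ω : Type*} [MeasurableSpace Ω] (μ : Measure Ω) [IsProbabilityMeasure μ]
    {p : ℕ} (hp : 2 ≤ p) (Z : Fin p → Ω → ℝ) (T D ε : Ω → ℝ)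
    (hmeas : ∀ i, Measurable (Z i)) (hTmeas : Measurable T) (hDmeas : Measurable D)
    (hεmeas : Measurable ε)
    (hindep : iIndepFun Z μ)
    (hint : ∀ i, Integrable (Z i) μ)
    (ζ : Fin p → ℝ) (hζ : ∀ i, ζ i = ∫ ω, Z i ω ∂μ)
    (β₀ : ℝ) (φ : Fin p → ℝ)
    (hstruct : ∀ ω, T ω = β₀ * D ω + (∑ k, φ k * Z k ω) + ε ω)
    (hεint : Integrable ε μ)
    (hcond : μ[ε | MeasurableSpace.comap (fun ω i => Z i ω) inferInstance] =ᵐ[μ] 0)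
    (j₁ j₂ : Fin p) (hj : j₁ ≠ j₂)
    (hTprod : Integrable (fun ω => (Z j₁ ω - ζ j₁) * (Z j₂ ω - ζ j₂) * T ω) μ)
    (hDprod : Integrable (fun ω => (Z j₁ ω - ζ j₁) * (Z j₂ ω - ζ j₂) * D ω) μ)
    (hεprod : Integrable (fun ω => (Z j₁ ω - ζ j₁) * (Z j₂ ω - ζ j₂) * ε ω) μ)
    (hZprod : ∀ k, Integrable (fun ω => (Z j₁ ω - ζ j₁) * (Z j₂ ω - ζ j₂) * Z k ω) μ)
    (m : ℝ → ℝ)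
    (hm : ∀ β, m β = ∫ ω, (Z j₁ ω - ζ j₁) * (Z j₂ ω - ζ j₂) * (T ω - β * D ω) ∂μ) :
    m β₀ = 0 ∧
      ((∫ ω, (Z j₁ ω - ζ j₁) * (Z j₂ ω - ζ j₂) * D ω ∂μ) ≠ 0 →
        ∀ β : ℝ, m β = 0 → β = β₀) :=
  interaction_moment_unique_zero_general μ Z T D ε hmeas hindep hint ζ hζ β₀ φ hstruct hεint hcond
    j₁ j₂ hj hDprod hεprod hZprod m hm
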